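/- Let L > 0 and λ > 0. Let p : ℝ × ℝ → ℝ be a C³ function which on the triangle T = {(x,y) : 0 ≤ x ≤ L, x ≤ y ≤ L} satisfies the p-kernel system with parameter λ: p_{xxx} + p_{yyy} + p_x + p_y = λ p in T, p(x,x) = 0 and p_x(x,x) = (λ/3)·x for x ∈ [0,L], and p(0,y) = 0 for y ∈ [0,L]. Let w̃ : ℝ × ℝ → ℝ be a smooth (C^∞) function satisfying, for all t ≥ 0 and x ∈ [0,L], ∂_t w̃ + ∂_x w̃ + ∂_x^3 w̃ + λ w̃ = 0, with w̃(t,0) = w̃(t,L) = 0 and ∂_x w̃(t,L) = 0 for all t ≥ 0. Define ũ(t,x) = w̃(t,x) − ∫ₓᴸ p(x,y) w̃(t,y) dy. Then for all t ≥ 0: (i) ∂_x² ũ(t,L) = ∂_x² w̃(t,L); (ii) for all x ∈ [0,L], ∂_t ũ + ∂_x ũ + ∂_x^3 ũ − p(x,L)·∂_x² w̃(t,L) = 0; and (iii) ũ(t,0) = ũ(t,L) = 0 and ∂_x ũ(t,L) = 0. -/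

import Mathlib

open MeasureTheory Function intervalIntegral

noncomputable def Dx (g : ℝ → ℝ → ℝ) : ℝ → ℝ → ℝ := fun x y => deriv (fun s => g s y) x
noncomputable def Dy (g : ℝ → ℝ → ℝ) : ℝ → ℝ → ℝ := fun x y => deriv (fun r => g x r) y


lemma hasDerivAt_fst {g : ℝ → ℝ → ℝ} (hg : Differentiable ℝ (uncurry g)) (x y : ℝ) :
    HasDerivAt (fun s => g s y) (fderiv ℝ (uncurry g) (x, y) (1, 0)) x := by
  have h1 : HasDerivAt (fun s : ℝ => (s, y)) ((1 : ℝ), (0 : ℝ)) x :=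
    (hasDerivAt_id x).prodMk (hasDerivAt_const x y)
  exact (hg (x, y)).hasFDerivAt.comp_hasDerivAt x h1

lemma hasDerivAt_snd {g : ℝ → ℝ → ℝ} (hg : Differentiable ℝ (uncurry g)) (x y : ℝ) :
    HasDerivAt (fun r => g x r) (fderiv ℝ (uncurry g) (x, y) (0, 1)) y := by
  have h1 : HasDerivAt (fun r : ℝ => (x, r)) ((0 : ℝ), (1 : ℝ)) y :=
    (hasDerivAt_const y x).prodMk (hasDerivAt_id y)
  exact (hg (x, y)).hasFDerivAt.comp_hasDerivAt y h1

lemma Dx_eq {g : ℝ → ℝ → ℝ} (hg : Differentiable ℝ (uncurry g)) (x y : ℝ) :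
    Dx g x y = fderiv ℝ (uncurry g) (x, y) (1, 0) := (hasDerivAt_fst hg x y).deriv

lemma Dy_eq {g : ℝ → ℝ → ℝ} (hg : Differentiable ℝ (uncurry g)) (x y : ℝ) :
    Dy g x y = fderiv ℝ (uncurry g) (x, y) (0, 1) := (hasDerivAt_snd hg x y).deriv

lemma hasDerivAt_Dx {g : ℝ → ℝ → ℝ} (hg : Differentiable ℝ (uncurry g)) (x y : ℝ) :
    HasDerivAt (fun s => g s y) (Dx g x y) x := by
  rw [Dx_eq hg]; exact hasDerivAt_fst hg x y

lemma hasDerivAt_Dy {g : ℝ → ℝ → ℝ} (hg : Differentiable ℝ (uncurry g)) (x y : ℝ) :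
    HasDerivAt (fun r => g x r) (Dy g x y) y := by
  rw [Dy_eq hg]; exact hasDerivAt_snd hg x y

lemma contDiff_Dx {g : ℝ → ℝ → ℝ} {n : ℕ} (hg : ContDiff ℝ (n+1 : ℕ) (uncurry g)) :
    ContDiff ℝ (n : ℕ) (uncurry (Dx g)) := by
  have hd : Differentiable ℝ (uncurry g) := hg.differentiable (by simp)
  have : uncurry (Dx g) = fun q : ℝ × ℝ => fderiv ℝ (uncurry g) q ((1 : ℝ), (0 : ℝ)) := by
    funext q; exact Dx_eq hd q.1 q.2
  rw [this]
  exact (hg.fderiv_right (by exact_mod_cast le_rfl)).clm_apply contDiff_const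

lemma contDiff_Dy {g : ℝ → ℝ → ℝ} {n : ℕ} (hg : ContDiff ℝ (n+1 : ℕ) (uncurry g)) :
    ContDiff ℝ (n : ℕ) (uncurry (Dy g)) := by
  have hd : Differentiable ℝ (uncurry g) := hg.differentiable (by simp)
  have : uncurry (Dy g) = fun q : ℝ × ℝ => fderiv ℝ (uncurry g) q ((0 : ℝ), (1 : ℝ)) := by
    funext q; exact Dy_eq hd q.1 q.2
  rw [this]
  exact (hg.fderiv_right (by exact_mod_cast le_rfl)).clm_apply contDiff_const



lemma hasDerivAt_diag {g : ℝ → ℝ → ℝ} (hg : Differentiable ℝ (uncurry g)) (x : ℝ) :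
    HasDerivAt (fun s => g s s) (Dx g x x + Dy g x x) x := by
  have h1 : HasDerivAt (fun s : ℝ => (s, s)) ((1 : ℝ), (1 : ℝ)) x :=
    (hasDerivAt_id x).prodMk (hasDerivAt_id x)
  have h2 : HasDerivAt ((uncurry g) ∘ (fun s : ℝ => (s, s)))
      (fderiv ℝ (uncurry g) (x, x) ((1:ℝ),(1:ℝ))) x :=
    HasFDerivAt.comp_hasDerivAt (f := fun s : ℝ => (s, s)) x (hg (x, x)).hasFDerivAt h1
  have h2 : HasDerivAt (fun s => g s s) (fderiv ℝ (uncurry g) (x, x) ((1:ℝ),(1:ℝ))) x := h2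
  have h3 : fderiv ℝ (uncurry g) (x, x) ((1:ℝ), (1:ℝ)) = Dx g x x + Dy g x x := by
    rw [Dx_eq hg, Dy_eq hg, ← ContinuousLinearMap.map_add]
    norm_num
  rwa [h3] at h2

lemma clairaut {g : ℝ → ℝ → ℝ} (hg : ContDiff ℝ (2 : ℕ) (uncurry g)) (x y : ℝ) :
    Dx (Dy g) x y = Dy (Dx g) x y := by
  have hd : Differentiable ℝ (uncurry g) := hg.differentiable (by norm_num)
  have hfd : ContDiff ℝ (1 : ℕ) (fderiv ℝ (uncurry g)) := by
    have := hg.fderiv_right (m := 1) (by norm_num)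
    exact this
  have hfdd : Differentiable ℝ (fderiv ℝ (uncurry g)) := hfd.differentiable (by norm_num)
  -- express both as second derivative
  have key : ∀ v w : ℝ × ℝ, fderiv ℝ (fderiv ℝ (uncurry g)) (x, y) v w
      = fderiv ℝ (fderiv ℝ (uncurry g)) (x, y) w v := by
    intro v w
    exact second_derivative_symmetric (fun q => (hd q).hasFDerivAt)
      (hfdd (x, y)).hasFDerivAt v w
  -- Dx (Dy g) x y = f'' (1,0) (0,1)
  have e1 : Dx (Dy g) x y = fderiv ℝ (fderiv ℝ (uncurry g)) (x, y) (1, 0) (0, 1) := by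
    have hD : HasDerivAt (fun s => Dy g s y)
        (fderiv ℝ (fderiv ℝ (uncurry g)) (x, y) (1, 0) (0, 1)) x := by
      have h1 : HasDerivAt (fun s : ℝ => (s, y)) ((1 : ℝ), (0 : ℝ)) x :=
        (hasDerivAt_id x).prodMk (hasDerivAt_const x y)
      have h2 : HasFDerivAt (fun q : ℝ × ℝ => fderiv ℝ (uncurry g) q ((0:ℝ),(1:ℝ)))
          ((ContinuousLinearMap.apply ℝ ℝ ((0:ℝ),(1:ℝ))).comp
            (fderiv ℝ (fderiv ℝ (uncurry g)) (x, y))) (x, y) :=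
        ((ContinuousLinearMap.apply ℝ ℝ ((0:ℝ),(1:ℝ))).hasFDerivAt).comp (x, y)
          (hfdd (x, y)).hasFDerivAt
      have h3 := h2.comp_hasDerivAt x h1
      have : (fun s => Dy g s y) = fun s => fderiv ℝ (uncurry g) (s, y) ((0:ℝ),(1:ℝ)) := by
        funext s; exact Dy_eq hd s y
      rw [this]
      exact h3
    exact hD.deriv
  have e2 : Dy (Dx g) x y = fderiv ℝ (fderiv ℝ (uncurry g)) (x, y) (0, 1) (1, 0) := by
    have hD : HasDerivAt (fun r => Dx g x r)
        (fderiv ℝ (fderiv ℝ (uncurry g)) (x, y) (0, 1) (1, 0)) y := by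
      have h1 : HasDerivAt (fun r : ℝ => (x, r)) ((0 : ℝ), (1 : ℝ)) y :=
        (hasDerivAt_const y x).prodMk (hasDerivAt_id y)
      have h2 : HasFDerivAt (fun q : ℝ × ℝ => fderiv ℝ (uncurry g) q ((1:ℝ),(0:ℝ)))
          ((ContinuousLinearMap.apply ℝ ℝ ((1:ℝ),(0:ℝ))).comp
            (fderiv ℝ (fderiv ℝ (uncurry g)) (x, y))) (x, y) :=
        ((ContinuousLinearMap.apply ℝ ℝ ((1:ℝ),(0:ℝ))).hasFDerivAt).comp (x, y)
          (hfdd (x, y)).hasFDerivAt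
      have h3 := h2.comp_hasDerivAt y h1
      have : (fun r => Dx g x r) = fun r => fderiv ℝ (uncurry g) (x, r) ((1:ℝ),(0:ℝ)) := by
        funext r; exact Dx_eq hd x r
      rw [this]
      exact h3
    exact hD.deriv
  rw [e1, e2, key]



lemma cont_slice {g : ℝ → ℝ → ℝ} (hg : Continuous (uncurry g)) (x : ℝ) :
    Continuous (fun y => g x y) :=
  hg.comp (continuous_const.prodMk continuous_id)

lemma hasDerivAt_param {g : ℝ → ℝ → ℝ} (hg : ContDiff ℝ (1:ℕ) (uncurry g)) (a b x₀ : ℝ) :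
    HasDerivAt (fun x => ∫ y in a..b, g x y) (∫ y in a..b, Dx g x₀ y) x₀ := by
  have hd : Differentiable ℝ (uncurry g) := hg.differentiable (by norm_num)
  have hcD : Continuous (uncurry (Dx g)) := (contDiff_Dx (n := 0) hg).continuous
  have hK : IsCompact ((Set.Icc (x₀-1) (x₀+1)) ×ˢ (Set.uIcc a b)) :=
    isCompact_Icc.prod isCompact_uIcc
  obtain ⟨C, hC⟩ := hK.exists_bound_of_continuousOn hcD.continuousOn
  have main := intervalIntegral.hasDerivAt_integral_of_dominated_loc_of_deriv_le
    (F := fun x y => g x y) (F' := Dx g) (x₀ := x₀) (a := a) (b := b)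
    (bound := fun _ => C) (s := Metric.ball x₀ 1) (μ := volume) (Metric.ball_mem_nhds x₀ one_pos)
    (Filter.Eventually.of_forall fun x =>
      ((cont_slice hg.continuous x).aestronglyMeasurable))
    ((cont_slice hg.continuous x₀).intervalIntegrable a b)
    ((cont_slice hcD x₀).aestronglyMeasurable)
    (Filter.Eventually.of_forall fun y hy x hx => by
      have hy' : y ∈ Set.uIcc a b := Set.Ioc_subset_Icc_self hy
      have hx' : x ∈ Set.Icc (x₀-1) (x₀+1) := by
        have := Metric.mem_ball.mp hx
        rw [Real.dist_eq] at this
        constructor <;> [linarith [abs_lt.mp this]; linarith [abs_lt.mp this |>.2]]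
      exact hC (x, y) (Set.mk_mem_prod hx' hy'))
    (intervalIntegrable_const)
    (Filter.Eventually.of_forall fun y hy x hx => hasDerivAt_Dx hd x y)
  exact main.2




lemma hasDerivAt_moving {g : ℝ → ℝ → ℝ} (hg : ContDiff ℝ (1:ℕ) (uncurry g)) (L x₀ : ℝ) :
    HasDerivAt (fun x => ∫ y in x..L, g x y) (-(g x₀ x₀) + ∫ y in x₀..L, Dx g x₀ y) x₀ := by
  have hc : Continuous (uncurry g) := hg.continuous
  have hint : ∀ x a b : ℝ, IntervalIntegrable (g x) volume a b := fun x a b =>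
    (cont_slice hc x).intervalIntegrable a b
  -- decomposition
  have hdec : ∀ x : ℝ, (∫ y in x..L, g x y)
      = (∫ y in x₀..L, g x y) - (∫ y in x₀..x, g x y) := by
    intro x
    have := integral_add_adjacent_intervals (hint x x x₀) (hint x x₀ L)
    have hsym : (∫ y in x..x₀, g x y) = -(∫ y in x₀..x, g x y) := integral_symm x₀ x
    linarith
  -- part 2 : the fixed-endpoint integral
  have h2 : HasDerivAt (fun x => ∫ y in x₀..L, g x y) (∫ y in x₀..L, Dx g x₀ y) x₀ :=
    hasDerivAt_param hg x₀ L x₀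
  -- part 3a : FTC part
  have h3a : HasDerivAt (fun x => ∫ y in x₀..x, g x₀ y) (g x₀ x₀) x₀ := by
    exact integral_hasDerivAt_right (hint x₀ x₀ x₀)
      ((cont_slice hc x₀).stronglyMeasurable.stronglyMeasurableAtFilter)
      (cont_slice hc x₀).continuousAt
  -- part 3b : remainder is o(x - x₀)
  have h3b : HasDerivAt (fun x => ∫ y in x₀..x, (g x y - g x₀ y)) 0 x₀ := by
    obtain ⟨K, t, ht, hlip⟩ :=
      (hg.contDiffAt (x := (x₀, x₀))).exists_lipschitzOnWith
    obtain ⟨δ, hδ, hball⟩ := Metric.mem_nhds_iff.mp ht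
    rw [hasDerivAt_iff_isLittleO]
    have hR0 : (∫ y in x₀..x₀, (g x₀ y - g x₀ y)) = 0 := integral_same
    rw [Asymptotics.isLittleO_iff]
    intro c hc'
    have hη : 0 < min (δ/2) (c / (K+1)) := by
      apply lt_min (by linarith)
      positivity
    rw [Metric.eventually_nhds_iff]
    refine ⟨min (δ/2) (c / (K+1)), hη, fun x hx => ?_⟩
    rw [Real.dist_eq] at hx
    have hxδ : |x - x₀| < δ/2 := lt_of_lt_of_le hx (min_le_left _ _)
    have hxc : |x - x₀| < c / (K+1) := lt_of_lt_of_le hx (min_le_right _ _)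
    have hbd : ∀ y ∈ Set.uIoc x₀ x, ‖g x y - g x₀ y‖ ≤ K * |x - x₀| := by
      intro y hy
      have hyx : |y - x₀| ≤ |x - x₀| := by
        rcases Set.mem_uIoc.mp hy with h | h
        · rw [abs_of_pos (by linarith [h.1]), abs_of_nonneg (by linarith [h.2] : (0:ℝ) ≤ x - x₀)]
          linarith [h.2]
        · rw [abs_of_nonpos (by linarith [h.2] : y - x₀ ≤ 0),
            abs_of_nonpos (by linarith [h.1] : x - x₀ ≤ 0)]
          linarith [h.1]
      have hmem : ∀ z : ℝ, |z - x₀| ≤ |x - x₀| → ((z, y) : ℝ × ℝ) ∈ t := by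
        intro z hz
        apply hball
        rw [Metric.mem_ball, Prod.dist_eq, Real.dist_eq, Real.dist_eq]
        exact lt_of_le_of_lt (max_le hz hyx) (by linarith)
      have h1 := hlip.dist_le_mul (x, y) (hmem x le_rfl) (x₀, y) (hmem x₀ (by simp [abs_nonneg]))
      rw [Prod.dist_eq, Real.dist_eq, Real.dist_eq, Real.dist_eq] at h1
      simpa [sub_self, abs_nonneg, max_eq_left] using h1
    have hIB : ‖∫ y in x₀..x, (g x y - g x₀ y)‖ ≤ K * |x - x₀| * |x - x₀| :=
      intervalIntegral.norm_integral_le_of_norm_le_const hbd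
    simp only [sub_zero, smul_eq_mul, mul_zero, integral_same]
    calc ‖∫ y in x₀..x, (g x y - g x₀ y)‖ ≤ K * |x - x₀| * |x - x₀| := hIB
      _ ≤ c * ‖x - x₀‖ := by
          rw [Real.norm_eq_abs]
          have h5 : (K : ℝ) * |x - x₀| ≤ c := by
            have : (K : ℝ) * |x - x₀| ≤ (K + 1) * |x - x₀| := by
              apply mul_le_mul_of_nonneg_right _ (abs_nonneg _)
              linarith
            have h6 : (K + 1 : ℝ) * |x - x₀| < (K+1) * (c / (K+1)) := by
              apply mul_lt_mul_of_pos_left hxc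
              positivity
            rw [mul_div_cancel₀] at h6
            · linarith
            · positivity
          exact mul_le_mul_of_nonneg_right h5 (abs_nonneg _)
  -- assemble part 3
  have h3 : HasDerivAt (fun x => ∫ y in x₀..x, g x y) (g x₀ x₀) x₀ := by
    have heq : ∀ x : ℝ, (∫ y in x₀..x, g x y)
        = (∫ y in x₀..x, g x₀ y) + (∫ y in x₀..x, (g x y - g x₀ y)) := by
      intro x
      rw [← integral_add (hint x₀ x₀ x) ((hint x x₀ x).sub (hint x₀ x₀ x))]
      congr 1; funext y; ring
    have := h3a.add h3b
    rw [add_zero] at this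
    exact this.congr_of_eventuallyEq (Filter.Eventually.of_forall fun x => (heq x))
  -- final
  have hfin : HasDerivAt (fun x => (∫ y in x₀..L, g x y) - (∫ y in x₀..x, g x y)) _ x₀ :=
    h2.sub h3
  have heq2 : (fun x => ∫ y in x..L, g x y)
      = fun x => (∫ y in x₀..L, g x y) - (∫ y in x₀..x, g x y) := funext hdec
  rw [heq2]
  convert hfin using 1
  ring



lemma uncMul {p : ℝ → ℝ → ℝ} {w : ℝ → ℝ} {n : ℕ} (hp : ContDiff ℝ (n:ℕ) (uncurry p))
    (hw : ContDiff ℝ (n:ℕ) w) : ContDiff ℝ (n:ℕ) (uncurry (fun a b => p a b * w b)) := by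
  have h : uncurry (fun a b => p a b * w b) = fun q : ℝ × ℝ => uncurry p q * w q.2 := rfl
  rw [h]; exact hp.mul (hw.comp contDiff_snd)

lemma Dx_mulw {p : ℝ → ℝ → ℝ} {w : ℝ → ℝ} (hp : Differentiable ℝ (uncurry p)) :
    Dx (fun a b => p a b * w b) = fun x y => Dx p x y * w y := by
  funext x y; exact ((hasDerivAt_Dx hp x y).mul_const (w y)).deriv

lemma contDiff_deriv_of {f : ℝ → ℝ} {n : ℕ} (hf : ContDiff ℝ (n+1:ℕ) f) :
    ContDiff ℝ (n:ℕ) (deriv f) := by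
  have h : ((n+1:ℕ) : WithTop ℕ∞) = (n:ℕ) + 1 := by push_cast; rfl
  exact (contDiff_succ_iff_deriv.mp (h ▸ hf)).2.2

lemma iteratedDeriv_two' (f : ℝ → ℝ) : iteratedDeriv 2 f = deriv (deriv f) := by
  simp [iteratedDeriv_succ, iteratedDeriv_zero]

lemma iteratedDeriv_three' (f : ℝ → ℝ) : iteratedDeriv 3 f = deriv (deriv (deriv f)) := by
  simp [iteratedDeriv_succ, iteratedDeriv_zero]

section chain
variable {p : ℝ → ℝ → ℝ} {w : ℝ → ℝ} {L : ℝ}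

theorem derivU (hp : ContDiff ℝ (3:ℕ) (uncurry p)) (hw : ContDiff ℝ (4:ℕ) w) (L : ℝ) :
    deriv (fun x => w x - ∫ y in x..L, p x y * w y)
      = fun x => deriv w x + p x x * w x - ∫ y in x..L, Dx p x y * w y := by
  funext x
  have hq : ContDiff ℝ (1:ℕ) (uncurry fun a b => p a b * w b) :=
    uncMul (hp.of_le (by norm_cast)) (hw.of_le (by norm_cast))
  have h1 := hasDerivAt_moving hq L x
  rw [Dx_mulw (hp.differentiable (by norm_num))] at h1
  have h2 : HasDerivAt (fun x => w x - ∫ y in x..L, p x y * w y) _ x :=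
    ((hw.differentiable (by norm_num) x).hasDerivAt).sub h1
  rw [h2.deriv]; ring

theorem derivU2 (hp : ContDiff ℝ (3:ℕ) (uncurry p)) (hw : ContDiff ℝ (4:ℕ) w) (L : ℝ) :
    deriv (fun x => deriv w x + p x x * w x - ∫ y in x..L, Dx p x y * w y)
      = fun x => deriv (deriv w) x
          + ((Dx p x x + Dy p x x) * w x + p x x * deriv w x + Dx p x x * w x)
          - ∫ y in x..L, Dx (Dx p) x y * w y := by
  funext x
  have hDxp : ContDiff ℝ (2:ℕ) (uncurry (Dx p)) := contDiff_Dx (n := 2) hp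
  have hq : ContDiff ℝ (1:ℕ) (uncurry fun a b => Dx p a b * w b) :=
    uncMul (hDxp.of_le (by norm_cast)) (hw.of_le (by norm_cast))
  have h1 := hasDerivAt_moving hq L x
  rw [Dx_mulw (hDxp.differentiable (by norm_num))] at h1
  have hdiag := (hasDerivAt_diag (hp.differentiable (by norm_num)) x).mul
    (hw.differentiable (by norm_num) x).hasDerivAt
  have hw1 : ContDiff ℝ (3:ℕ) (deriv w) := contDiff_deriv_of hw
  have h2 : HasDerivAt (fun x => deriv w x + p x x * w x - ∫ y in x..L, Dx p x y * w y) _ x :=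
    (((hw1.differentiable (by norm_num)) x).hasDerivAt.add hdiag).sub h1
  rw [h2.deriv]; ring

theorem derivU3 (hp : ContDiff ℝ (3:ℕ) (uncurry p)) (hw : ContDiff ℝ (4:ℕ) w) (L x : ℝ) :
    HasDerivAt (fun x => deriv (deriv w) x
          + ((Dx p x x + Dy p x x) * w x + p x x * deriv w x + Dx p x x * w x)
          - ∫ y in x..L, Dx (Dx p) x y * w y)
      (deriv (deriv (deriv w)) x
        + (((Dx (Dx p) x x + Dy (Dx p) x x) + (Dx (Dy p) x x + Dy (Dy p) x x)) * w x
            + (Dx p x x + Dy p x x) * deriv w x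
            + ((Dx p x x + Dy p x x) * deriv w x + p x x * deriv (deriv w) x)
            + ((Dx (Dx p) x x + Dy (Dx p) x x) * w x + Dx p x x * deriv w x)
            + Dx (Dx p) x x * w x)
        - ∫ y in x..L, Dx (Dx (Dx p)) x y * w y) x := by
  have hdp : Differentiable ℝ (uncurry p) := hp.differentiable (by norm_num)
  have hDxp : ContDiff ℝ (2:ℕ) (uncurry (Dx p)) := contDiff_Dx (n := 2) hp
  have hDyp : ContDiff ℝ (2:ℕ) (uncurry (Dy p)) := contDiff_Dy (n := 2) hp
  have hDxxp : ContDiff ℝ (1:ℕ) (uncurry (Dx (Dx p))) := contDiff_Dx (n := 1) hDxp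
  have hw1 : ContDiff ℝ (3:ℕ) (deriv w) := contDiff_deriv_of hw
  have hw2 : ContDiff ℝ (2:ℕ) (deriv (deriv w)) := contDiff_deriv_of hw1
  have hwd : Differentiable ℝ w := hw.differentiable (by norm_num)
  have hw1d : Differentiable ℝ (deriv w) := hw1.differentiable (by norm_num)
  have hw2d : Differentiable ℝ (deriv (deriv w)) := hw2.differentiable (by norm_num)
  -- integral part
  have hq : ContDiff ℝ (1:ℕ) (uncurry fun a b => Dx (Dx p) a b * w b) :=
    uncMul hDxxp (hw.of_le (by norm_cast))
  have h1 := hasDerivAt_moving hq L x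
  rw [Dx_mulw (hDxxp.differentiable (by norm_num))] at h1
  -- diag parts
  have hT2 := ((hasDerivAt_diag (hDxp.differentiable (by norm_num)) x).add
      (hasDerivAt_diag (hDyp.differentiable (by norm_num)) x)).mul (hwd x).hasDerivAt
  have hT3 := (hasDerivAt_diag hdp x).mul (hw1d x).hasDerivAt
  have hT4 := (hasDerivAt_diag (hDxp.differentiable (by norm_num)) x).mul (hwd x).hasDerivAt
  have hsum : HasDerivAt (fun x => deriv (deriv w) x
            + ((Dx p x x + Dy p x x) * w x + p x x * deriv w x + Dx p x x * w x)
            - ∫ y in x..L, Dx (Dx p) x y * w y) _ x :=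
    (((hw2d x).hasDerivAt.add ((hT2.add hT3).add hT4)).sub h1)
  convert hsum using 1
  simp only [Pi.add_apply]
  ring
end chain



/-- t-derivative of the transformed function -/
theorem derivT {p wt : ℝ → ℝ → ℝ} (hp : ContDiff ℝ (3:ℕ) (uncurry p))
    (hwt : ContDiff ℝ (⊤ : ℕ∞) (uncurry wt)) (x L t : ℝ) :
    HasDerivAt (fun s => wt s x - ∫ y in x..L, p x y * wt s y)
      (deriv (fun s => wt s x) t - ∫ y in x..L, p x y * deriv (fun s => wt s y) t) t := by
  have hwt1 : ContDiff ℝ (1:ℕ) (uncurry wt) := hwt.of_le (by simp)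
  have hg : ContDiff ℝ (1:ℕ) (uncurry fun s y => p x y * wt s y) := by
    have h : uncurry (fun s y => p x y * wt s y)
        = fun q : ℝ × ℝ => (uncurry p) (x, q.2) * uncurry wt q := rfl
    rw [h]
    exact ((hp.of_le (by norm_cast)).comp (contDiff_const.prodMk contDiff_snd)).mul hwt1
  have hdiffs : ∀ y s : ℝ, DifferentiableAt ℝ (fun s => wt s y) s := by
    intro y s
    have : (fun s => wt s y) = uncurry wt ∘ (fun s : ℝ => (s, y)) := rfl
    rw [this]
    exact DifferentiableAt.comp s (hwt1.differentiable (by norm_num) (s, y))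
      (differentiableAt_id.prodMk (differentiableAt_const y))
  have hDx : ∀ y : ℝ, Dx (fun s y => p x y * wt s y) t y
      = p x y * deriv (fun s => wt s y) t := by
    intro y
    exact (((hdiffs y t).hasDerivAt).const_mul (p x y)).deriv
  have h1 := hasDerivAt_param hg x L t
  simp only [hDx] at h1
  exact ((hdiffs x t).hasDerivAt).sub h1

/-- integration by parts -/
theorem IBP {f : ℝ → ℝ → ℝ} {v : ℝ → ℝ} (hf : ContDiff ℝ (1:ℕ) (uncurry f))
    (hv : Differentiable ℝ v) (hv' : Continuous (deriv v)) (x L : ℝ) :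
    ∫ y in x..L, f x y * deriv v y
      = f x L * v L - f x x * v x - ∫ y in x..L, Dy f x y * v y := by
  have hfd : Differentiable ℝ (uncurry f) := hf.differentiable (by norm_num)
  have hcDy : Continuous (uncurry (Dy f)) := (contDiff_Dy (n := 0) hf).continuous
  exact integral_mul_deriv_eq_deriv_mul
    (fun y _ => hasDerivAt_Dy hfd x y)
    (fun y _ => (hv y).hasDerivAt)
    ((cont_slice hcDy x).intervalIntegrable x L)
    (hv'.intervalIntegrable x L)

/-- vanishing of derivative-type diagonal quantities from boundary data -/
theorem diag_deriv_eq {g : ℝ → ℝ → ℝ} {c₀ c₁ L : ℝ} (hL : 0 < L)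
    (hg2 : ContDiff ℝ (2:ℕ) (uncurry g))
    (hdiag : ∀ x ∈ Set.Icc (0:ℝ) L, g x x = c₀ + c₁ * x) :
    ∀ x ∈ Set.Icc (0:ℝ) L, Dx g x x + Dy g x x = c₁ := by
  have hgd : Differentiable ℝ (uncurry g) := hg2.differentiable (by norm_num)
  have hcont : Continuous (fun x => Dx g x x + Dy g x x) := by
    have c1 : Continuous (uncurry (Dx g)) := (contDiff_Dx (n := 1) hg2).continuous
    have c2 : Continuous (uncurry (Dy g)) := (contDiff_Dy (n := 1) hg2).continuous
    exact ((c1.comp (continuous_id.prodMk continuous_id)).add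
      (c2.comp (continuous_id.prodMk continuous_id)))
  have hopen : ∀ x ∈ Set.Ioo (0:ℝ) L, Dx g x x + Dy g x x = c₁ := by
    intro x hx
    have h1 := hasDerivAt_diag hgd x
    have h2 : HasDerivAt (fun s => g s s) c₁ x := by
      have h3 : HasDerivAt (fun s : ℝ => c₀ + c₁ * s) c₁ x := by
        simpa using ((hasDerivAt_id x).const_mul c₁).const_add c₀
      apply h3.congr_of_eventuallyEq
      filter_upwards [Ioo_mem_nhds hx.1 hx.2] with s hs
      exact hdiag s ⟨hs.1.le, hs.2.le⟩
    exact h1.unique h2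
  have hclos : Set.EqOn (fun x => Dx g x x + Dy g x x) (fun _ => c₁) (closure (Set.Ioo 0 L)) :=
    Set.EqOn.closure (fun x hx => hopen x hx) hcont continuous_const
  intro x hx
  have : x ∈ closure (Set.Ioo (0:ℝ) L) := by
    rw [closure_Ioo hL.ne]; exact hx
  exact hclos this



lemma Dx_def (p : ℝ → ℝ → ℝ) (x y : ℝ) : Dx p x y = deriv (fun s => p s y) x := rfl
lemma Dy_def (p : ℝ → ℝ → ℝ) (x y : ℝ) : Dy p x y = deriv (fun r => p x r) y := rfl

lemma Dx3_eq (p : ℝ → ℝ → ℝ) (x y : ℝ) :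
    Dx (Dx (Dx p)) x y = iteratedDeriv 3 (fun s => p s y) x := by
  rw [iteratedDeriv_three']; rfl

lemma Dy3_eq (p : ℝ → ℝ → ℝ) (x y : ℝ) :
    Dy (Dy (Dy p)) x y = iteratedDeriv 3 (fun r => p x r) y := by
  rw [iteratedDeriv_three']; rfl

theorem kernel_int {p : ℝ → ℝ → ℝ} {w : ℝ → ℝ} {lam L x : ℝ}
    (hp : ContDiff ℝ (3:ℕ) (uncurry p)) (cw : Continuous w)
    (hpz : ∀ y ∈ Set.uIcc x L,
      Dx (Dx (Dx p)) x y + Dy (Dy (Dy p)) x y + Dx p x y + Dy p x y - lam * p x y = 0) :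
    (∫ y in x..L, Dx (Dx (Dx p)) x y * w y) + (∫ y in x..L, Dy (Dy (Dy p)) x y * w y)
      + (∫ y in x..L, Dx p x y * w y) + (∫ y in x..L, Dy p x y * w y)
      - lam * (∫ y in x..L, p x y * w y) = 0 := by
  have c0 : Continuous (uncurry p) := hp.continuous
  have c1 : Continuous (uncurry (Dx p)) := (contDiff_Dx (n := 2) hp).continuous
  have c2 : Continuous (uncurry (Dy p)) := (contDiff_Dy (n := 2) hp).continuous
  have c3 : Continuous (uncurry (Dx (Dx (Dx p)))) :=
    (contDiff_Dx (n := 0) (contDiff_Dx (n := 1) (contDiff_Dx (n := 2) hp))).continuous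
  have c4 : Continuous (uncurry (Dy (Dy (Dy p)))) :=
    (contDiff_Dy (n := 0) (contDiff_Dy (n := 1) (contDiff_Dy (n := 2) hp))).continuous
  have iA : IntervalIntegrable (fun y => Dx (Dx (Dx p)) x y * w y) volume x L :=
    ((cont_slice c3 x).mul cw).intervalIntegrable x L
  have iB : IntervalIntegrable (fun y => Dy (Dy (Dy p)) x y * w y) volume x L :=
    ((cont_slice c4 x).mul cw).intervalIntegrable x L
  have iC : IntervalIntegrable (fun y => Dx p x y * w y) volume x L :=
    ((cont_slice c1 x).mul cw).intervalIntegrable x L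
  have iD : IntervalIntegrable (fun y => Dy p x y * w y) volume x L :=
    ((cont_slice c2 x).mul cw).intervalIntegrable x L
  have iE : IntervalIntegrable (fun y => lam * (p x y * w y)) volume x L :=
    (continuous_const.mul ((cont_slice c0 x).mul cw)).intervalIntegrable x L
  have hJ : (∫ y in x..L,
      ((Dx (Dx (Dx p)) x y * w y + Dy (Dy (Dy p)) x y * w y + Dx p x y * w y
        + Dy p x y * w y) - lam * (p x y * w y))) = 0 := by
    rw [intervalIntegral.integral_congr (g := fun _ => (0:ℝ))]
    · simp
    · intro y hy
      have := hpz y hy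
      simp only
      linear_combination w y * this
  rw [intervalIntegral.integral_sub (((iA.add iB).add iC).add iD) iE,
    intervalIntegral.integral_add ((iA.add iB).add iC) iD,
    intervalIntegral.integral_add (iA.add iB) iC,
    intervalIntegral.integral_add iA iB,
    intervalIntegral.integral_const_mul] at hJ
  linarith [hJ]
/-- Observer backstepping transformation: if `p` solves the observer kernel PDE system on the
triangle and `w̃` solves the homogeneous target system, then
`ũ(t,x) = w̃(t,x) - ∫ₓᴸ p(x,y) w̃(t,y) dy` satisfies (i) `ũ_xx(t,L) = w̃_xx(t,L)`,
(ii) the observer error equation `ũ_t + ũ_x + ũ_xxx - p(x,L) w̃_xx(t,L) = 0` on `[0,L]`, and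
(iii) the boundary conditions `ũ(t,0) = ũ(t,L) = 0`, `ũ_x(t,L) = 0`. -/
theorem observer_transformation_maps_target_to_error
    (L lam : ℝ) (hL : 0 < L) (hlam : 0 < lam)
    (p : ℝ → ℝ → ℝ) (hp : ContDiff ℝ 3 (Function.uncurry p))
    (hppde : ∀ x y : ℝ, (x, y) ∈ {q : ℝ × ℝ | 0 ≤ q.1 ∧ q.1 ≤ L ∧ q.1 ≤ q.2 ∧ q.2 ≤ L} →
      iteratedDeriv 3 (fun s => p s y) x + iteratedDeriv 3 (fun r => p x r) y
        + deriv (fun s => p s y) x + deriv (fun r => p x r) y = lam * p x y)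
    (hpdiag : ∀ x ∈ Set.Icc (0:ℝ) L, p x x = 0)
    (hpxdiag : ∀ x ∈ Set.Icc (0:ℝ) L, deriv (fun s => p s x) x = lam / 3 * x)
    (hp0 : ∀ y ∈ Set.Icc (0:ℝ) L, p 0 y = 0)
    (wt : ℝ → ℝ → ℝ) (hwt : ContDiff ℝ (⊤ : ℕ∞) (Function.uncurry wt))
    (hwtpde : ∀ t ≥ (0:ℝ), ∀ x ∈ Set.Icc (0:ℝ) L,
      deriv (fun s => wt s x) t + deriv (fun y => wt t y) x
        + iteratedDeriv 3 (fun y => wt t y) x + lam * wt t x = 0)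
    (hwtbc0 : ∀ t ≥ (0:ℝ), wt t 0 = 0)
    (hwtbcL : ∀ t ≥ (0:ℝ), wt t L = 0)
    (hwtbcxL : ∀ t ≥ (0:ℝ), deriv (fun y => wt t y) L = 0)
    (ut : ℝ → ℝ → ℝ)
    (hutdef : ∀ t x : ℝ, ut t x = wt t x - ∫ y in x..L, p x y * wt t y) :
    ∀ t ≥ (0:ℝ),
      iteratedDeriv 2 (fun y => ut t y) L = iteratedDeriv 2 (fun y => wt t y) L ∧
      (∀ x ∈ Set.Icc (0:ℝ) L,
        deriv (fun s => ut s x) t + deriv (fun y => ut t y) x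
          + iteratedDeriv 3 (fun y => ut t y) x
          - p x L * iteratedDeriv 2 (fun y => wt t y) L = 0) ∧
      ut t 0 = 0 ∧ ut t L = 0 ∧ deriv (fun y => ut t y) L = 0 := by
  intro t ht
  have hp' : ContDiff ℝ ((3:ℕ)) (Function.uncurry p) := by exact_mod_cast hp
  have hwC : ContDiff ℝ ((4:ℕ)) (wt t) :=
    (hwt.of_le (WithTop.coe_le_coe.mpr le_top)).comp (contDiff_const.prodMk contDiff_id)
  have hwd : Differentiable ℝ (wt t) := hwC.differentiable (by norm_num)
  have hw1C : ContDiff ℝ (3:ℕ) (deriv (wt t)) := contDiff_deriv_of hwC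
  have hw2C : ContDiff ℝ (2:ℕ) (deriv (deriv (wt t))) := contDiff_deriv_of hw1C
  have hw3C : ContDiff ℝ (1:ℕ) (deriv (deriv (deriv (wt t)))) := contDiff_deriv_of hw2C
  have cw : Continuous (wt t) := hwC.continuous
  have cw1 : Continuous (deriv (wt t)) := hw1C.continuous
  have cw2 : Continuous (deriv (deriv (wt t))) := hw2C.continuous
  have cw3 : Continuous (deriv (deriv (deriv (wt t)))) := hw3C.continuous
  have hbcL : wt t L = 0 := hwtbcL t ht
  have hbcxL : deriv (wt t) L = 0 := hwtbcxL t ht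
  have hueq : (fun y => ut t y) = (fun x => wt t x - ∫ y in x..L, p x y * wt t y) :=
    funext fun x => hutdef t x
  have hU1 : deriv (fun x => wt t x - ∫ y in x..L, p x y * wt t y)
      = fun x => deriv (wt t) x + p x x * wt t x - ∫ y in x..L, Dx p x y * wt t y :=
    derivU hp' hwC L
  have hU2 : deriv (fun x => deriv (wt t) x + p x x * wt t x - ∫ y in x..L, Dx p x y * wt t y)
      = fun x => deriv (deriv (wt t)) x
          + ((Dx p x x + Dy p x x) * wt t x + p x x * deriv (wt t) x + Dx p x x * wt t x)
          - ∫ y in x..L, Dx (Dx p) x y * wt t y :=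
    derivU2 hp' hwC L
  have hLIcc : L ∈ Set.Icc (0:ℝ) L := ⟨hL.le, le_rfl⟩
  refine ⟨?_, ?_, ?_, ?_, ?_⟩
  · -- (i)
    rw [iteratedDeriv_two', iteratedDeriv_two', hueq, hU1, hU2]
    simp only
    rw [intervalIntegral.integral_same, hpdiag L hLIcc, hbcL]
    ring_nf
  · -- (ii)
    intro x hx
    obtain ⟨hx0, hxL⟩ := hx
    have huIcc : Set.uIcc x L = Set.Icc x L := Set.uIcc_of_le hxL
    have cp : Continuous (fun y => p x y) := cont_slice hp'.continuous x
    -- t-derivative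
    have htd : deriv (fun s => ut s x) t
        = deriv (fun s => wt s x) t - ∫ y in x..L, p x y * deriv (fun s => wt s y) t := by
      have h : (fun s => ut s x) = (fun s => wt s x - ∫ y in x..L, p x y * wt s y) :=
        funext fun s => hutdef s x
      rw [h]; exact (derivT hp' hwt x L t).deriv
    -- x-derivative
    have hxd : deriv (fun y => ut t y) x
        = deriv (wt t) x + p x x * wt t x - ∫ y in x..L, Dx p x y * wt t y := by
      rw [hueq, hU1]
    -- third x-derivative
    have h3d : iteratedDeriv 3 (fun y => ut t y) x
        = deriv (deriv (deriv (wt t))) x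
          + (((Dx (Dx p) x x + Dy (Dx p) x x) + (Dx (Dy p) x x + Dy (Dy p) x x)) * wt t x
              + (Dx p x x + Dy p x x) * deriv (wt t) x
              + ((Dx p x x + Dy p x x) * deriv (wt t) x + p x x * deriv (deriv (wt t)) x)
              + ((Dx (Dx p) x x + Dy (Dx p) x x) * wt t x + Dx p x x * deriv (wt t) x)
              + Dx (Dx p) x x * wt t x)
          - ∫ y in x..L, Dx (Dx (Dx p)) x y * wt t y := by
      rw [iteratedDeriv_three', hueq, hU1, hU2]
      exact (derivU3 hp' hwC L x).deriv
    -- substitute the target PDE inside the time integral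
    have intA : IntervalIntegrable (fun y => p x y * deriv (wt t) y) volume x L :=
      (cp.mul cw1).intervalIntegrable x L
    have intB : IntervalIntegrable (fun y => p x y * deriv (deriv (deriv (wt t))) y) volume x L :=
      (cp.mul cw3).intervalIntegrable x L
    have intE : IntervalIntegrable (fun y => lam * (p x y * wt t y)) volume x L :=
      (continuous_const.mul (cp.mul cw)).intervalIntegrable x L
    have hA : (∫ y in x..L, p x y * deriv (fun s => wt s y) t)
        = -(∫ y in x..L, p x y * deriv (wt t) y)
          - (∫ y in x..L, p x y * deriv (deriv (deriv (wt t))) y)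
          - lam * (∫ y in x..L, p x y * wt t y) := by
      have hcg : (∫ y in x..L, p x y * deriv (fun s => wt s y) t)
          = ∫ y in x..L, (-(p x y * deriv (wt t) y)
              - p x y * deriv (deriv (deriv (wt t))) y - lam * (p x y * wt t y)) := by
        apply intervalIntegral.integral_congr
        intro y hy
        rw [huIcc] at hy
        have hpde := hwtpde t ht y ⟨le_trans hx0 hy.1, hy.2⟩
        rw [iteratedDeriv_three'] at hpde
        simp only
        linear_combination p x y * hpde
      have intAneg : IntervalIntegrable (fun y => -(p x y * deriv (wt t) y)) volume x L :=
        intA.neg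
      rw [hcg, intervalIntegral.integral_sub (intAneg.sub intB) intE,
        intervalIntegral.integral_sub intAneg intB,
        intervalIntegral.integral_neg, intervalIntegral.integral_const_mul]
    -- integration by parts
    have hB1 : (∫ y in x..L, p x y * deriv (wt t) y)
        = p x L * wt t L - p x x * wt t x - ∫ y in x..L, Dy p x y * wt t y :=
      IBP (hp'.of_le (by norm_cast)) hwd cw1 x L
    have hB3a : (∫ y in x..L, p x y * deriv (deriv (deriv (wt t))) y)
        = p x L * deriv (deriv (wt t)) L - p x x * deriv (deriv (wt t)) x
          - ∫ y in x..L, Dy p x y * deriv (deriv (wt t)) y :=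
      IBP (hp'.of_le (by norm_cast)) (hw2C.differentiable (by norm_num)) cw3 x L
    have hB3b : (∫ y in x..L, Dy p x y * deriv (deriv (wt t)) y)
        = Dy p x L * deriv (wt t) L - Dy p x x * deriv (wt t) x
          - ∫ y in x..L, Dy (Dy p) x y * deriv (wt t) y :=
      IBP ((contDiff_Dy (n := 2) hp').of_le (by norm_cast))
        (hw1C.differentiable (by norm_num)) cw2 x L
    have hB3c : (∫ y in x..L, Dy (Dy p) x y * deriv (wt t) y)
        = Dy (Dy p) x L * wt t L - Dy (Dy p) x x * wt t x
          - ∫ y in x..L, Dy (Dy (Dy p)) x y * wt t y :=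
      IBP (contDiff_Dy (n := 1) (contDiff_Dy (n := 2) hp')) hwd cw1 x L
    -- kernel PDE integral identity
    have hK := kernel_int (w := wt t) (lam := lam) (L := L) (x := x) hp' cw (by
      intro y hy
      rw [huIcc] at hy
      have h := hppde x y ⟨hx0, hxL, hy.1, hy.2⟩
      rw [Dx3_eq, Dy3_eq, Dx_def, Dy_def]
      linarith [h])
    -- diagonal identities
    have hR2 : Dx p x x + Dy p x x = 0 := by
      have := diag_deriv_eq (g := p) (c₀ := 0) (c₁ := 0) hL (hp'.of_le (by norm_cast))
        (fun z hz => by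
          show p z z = 0 + 0 * z
          rw [hpdiag z hz]; ring) x ⟨hx0, hxL⟩
      simpa using this
    have hR3 : Dx (Dx p) x x + Dy (Dx p) x x = lam / 3 := by
      have := diag_deriv_eq (g := Dx p) (c₀ := 0) (c₁ := lam / 3) hL (contDiff_Dx (n := 2) hp')
        (fun z hz => by
          show Dx p z z = 0 + lam / 3 * z
          show deriv (fun s => p s z) z = 0 + lam / 3 * z
          rw [hpxdiag z hz]; ring) x ⟨hx0, hxL⟩
      simpa using this
    have hCl : Dx (Dy p) x x = Dy (Dx p) x x := clairaut (hp'.of_le (by norm_cast)) x x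
    have hR1 := hwtpde t ht x ⟨hx0, hxL⟩
    rw [iteratedDeriv_three'] at hR1
    rw [htd, hxd, h3d, iteratedDeriv_two', hA, hB1, hB3a, hB3b, hB3c, hbcL, hbcxL, hCl]
    linear_combination hR1 + (3 * wt t x) * hR3 + (3 * deriv (wt t) x) * hR2 - hK
  · -- ut t 0 = 0
    rw [hutdef t 0]
    have h0 : (∫ y in (0:ℝ)..L, p 0 y * wt t y) = 0 := by
      rw [intervalIntegral.integral_congr (g := fun _ => (0:ℝ))
        (by
          intro y hy
          rw [Set.uIcc_of_le hL.le] at hy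
          simp [hp0 y hy])]
      simp
    rw [h0, hwtbc0 t ht]; ring
  · -- ut t L = 0
    rw [hutdef t L, intervalIntegral.integral_same, hbcL]; ring
  · -- deriv ut at L = 0
    rw [hueq, hU1]
    simp only
    rw [intervalIntegral.integral_same, hpdiag L hLIcc, hbcxL]
    ring
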